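/- For α > 0, β > 0, t > 0 satisfying t⁴ − ((1+2β)/α)t² + 1/(4α²) < 0, the cubic g(x) = 2t⁴x³ − (t⁴ + ((1+2β)/α)t²)x² + 1/(4α²) has a unique root in the open interval (0,1). -/
import Mathlib


theorem stmt12 (α β t : ℝ) (hα : 0 < α) (hβ : 0 < β) (ht : 0 < t)
    (h : t ^ 4 - ((1 + 2 * β) / α) * t ^ 2 + 1 / (4 * α ^ 2) < 0) :
    ∃! x : ℝ, x ∈ Set.Ioo (0 : ℝ) 1 ∧
      2 * t ^ 4 * x ^ 3 - (t ^ 4 + ((1 + 2 * β) / α) * t ^ 2) * x ^ 2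
        + 1 / (4 * α ^ 2) = 0 := by
  set c : ℝ := (1 + 2 * β) / α with hc
  set k : ℝ := 1 / (4 * α ^ 2) with hk
  set A : ℝ := t ^ 4 + c * t ^ 2 with hA
  have hk0 : 0 < k := by rw [hk]; positivity
  have ht4 : 0 < t ^ 4 := by positivity
  have hAbig : 2 * t ^ 4 + k < A := by
    have : t ^ 4 + k < c * t ^ 2 := by linarith
    simp only [hA]; linarith
  set f : ℝ → ℝ := fun x => 2 * t ^ 4 * x ^ 3 - A * x ^ 2 + k with hf
  have hcont : ContinuousOn f (Set.Icc (0:ℝ) 1) := by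
    apply Continuous.continuousOn; fun_prop
  have hf0 : f 0 = k := by simp [hf]
  have hf1 : f 1 < 0 := by
    have : f 1 = t ^ 4 - c * t ^ 2 + k := by simp [hf, hA]; ring
    rw [this]; linarith
  have hexists : ∃ x ∈ Set.Ioo (0:ℝ) 1, f x = 0 := by
    have h01 : (0:ℝ) ≤ 1 := by norm_num
    have := intermediate_value_Ioo' h01 hcont
    have hmem : (0:ℝ) ∈ Set.Ioo (f 1) (f 0) := by
      constructor
      · exact hf1
      · rw [hf0]; exact hk0
    obtain ⟨x, hx, hfx⟩ := this hmem
    exact ⟨x, hx, hfx⟩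
  obtain ⟨x, hxmem, hxroot⟩ := hexists
  have huniq : ∀ u v : ℝ, u ∈ Set.Ioo (0:ℝ) 1 → v ∈ Set.Ioo (0:ℝ) 1 →
      f u = 0 → f v = 0 → u = v := by
    intro u v hu hv hfu hfv
    by_contra hne
    obtain ⟨hu0, hu1⟩ := hu
    obtain ⟨hv0, hv1⟩ := hv
    have hsub : u - v ≠ 0 := sub_ne_zero.mpr hne
    simp only [hf] at hfu hfv
    -- derive E2 : 2 t^4 u^2 v^2 = k (u+v)
    have E2 : 2 * t ^ 4 * (u ^ 2 * v ^ 2) = k * (u + v) := by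
      have key : (u - v) * (2 * t ^ 4 * (u ^ 2 * v ^ 2) - k * (u + v)) = 0 := by
        linear_combination v ^ 2 * hfu - u ^ 2 * hfv
      have := mul_eq_zero.mp key
      rcases this with h1 | h2
      · exact absurd h1 hsub
      · linarith
    -- derive E3 : A u^2 v^2 = k (u^2 + u v + v^2)
    have E3 : A * (u ^ 2 * v ^ 2) = k * (u ^ 2 + u * v + v ^ 2) := by
      linear_combination (-(v ^ 2)) * hfu + u * E2
    -- contradiction
    have hineq : u ^ 2 + u * v + v ^ 2 ≤ u + v + u ^ 2 * v ^ 2 := by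
      nlinarith [mul_nonneg (mul_nonneg hu0.le (sub_nonneg.mpr hu1.le)) (sub_nonneg.mpr hv1.le),
        mul_nonneg (mul_nonneg hv0.le (sub_nonneg.mpr hv1.le)) (sub_nonneg.mpr hu1.le),
        mul_nonneg (mul_nonneg (mul_nonneg hu0.le hv0.le) (sub_nonneg.mpr hu1.le)) (sub_nonneg.mpr hv1.le)]
    have hpos : 0 < u ^ 2 * v ^ 2 := by positivity
    have hmul := mul_lt_mul_of_pos_right hAbig hpos
    have hle := mul_le_mul_of_nonneg_left hineq hk0.le
    have e1 : k * (u + v + u ^ 2 * v ^ 2) = k * (u + v) + k * (u ^ 2 * v ^ 2) := by ring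
    have e2 : (2 * t ^ 4 + k) * (u ^ 2 * v ^ 2)
        = 2 * t ^ 4 * (u ^ 2 * v ^ 2) + k * (u ^ 2 * v ^ 2) := by ring
    linarith
  refine ⟨x, ⟨hxmem, hxroot⟩, ?_⟩
  rintro y ⟨hymem, hyroot⟩
  exact huniq y x hymem hxmem hyroot hxroot
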